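/- If C is a countable dense subset of a bicontinuous poset X in its interval topology, then the collection {(a,b) : a,b ∈ C, a ≪ b} is a countable basis for the interval topology; hence separability implies second countability. -/

import Mathlib

open Set

/-- `a` is way below `x`. -/
def wayBelow {α : Type*} [Preorder α] (a x : α) : Prop :=
  ∀ S : Set α, S.Nonempty → DirectedOn (· ≤ ·) S → ∀ d, IsLUB S d → x ≤ d →
    ∃ s ∈ S, a ≤ s

/-- A poset is continuous if every element is the supremum of a directed set
of elements way below it. -/
def ContinuousPoset (α : Type*) [Preorder α] : Prop :=
  ∀ x : α, ∃ S : Set α, S ⊆ {a | wayBelow a x} ∧ S.Nonempty ∧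
    DirectedOn (· ≤ ·) S ∧ IsLUB S x

/-- A basis for a continuous poset. -/
def PosetBasis {α : Type*} [Preorder α] (B : Set α) : Prop :=
  ∀ x : α, ∃ S : Set α, S ⊆ B ∩ {a | wayBelow a x} ∧ S.Nonempty ∧
    DirectedOn (· ≤ ·) S ∧ IsLUB S x

/-- Scott open sets: upper sets inaccessible by directed suprema. -/
def ScottOpen {α : Type*} [Preorder α] (U : Set α) : Prop :=
  IsUpperSet U ∧ ∀ S : Set α, S.Nonempty → DirectedOn (· ≤ ·) S → ∀ d, IsLUB S d →
    d ∈ U → (S ∩ U).Nonempty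

/-- The Scott topology. -/
def scottTop (α : Type*) [Preorder α] : TopologicalSpace α :=
  TopologicalSpace.generateFrom {U | ScottOpen U}

/-- A bicontinuous poset. -/
def Bicontinuous (α : Type*) [Preorder α] : Prop :=
  ContinuousPoset α ∧
  (∀ x y : α, wayBelow x y ↔
    ∀ S : Set α, S.Nonempty → DirectedOn (· ≥ ·) S → ∀ i, IsGLB S i → i ≤ x →
      ∃ s ∈ S, s ≤ y) ∧
  (∀ x : α, DirectedOn (· ≥ ·) {y | wayBelow x y} ∧ IsGLB {y | wayBelow x y} x)

/-- The basic open intervals `(a,b) = {x | a ≪ x ≪ b}`. -/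
def intervalBasis (α : Type*) [Preorder α] : Set (Set α) :=
  {s | ∃ a b : α, s = {x | wayBelow a x ∧ wayBelow x b}}

/-- The interval topology, generated by the sets `(a,b)`. -/
def intervalTop (α : Type*) [Preorder α] : TopologicalSpace α :=
  TopologicalSpace.generateFrom (intervalBasis α)

/-- A globally hyperbolic poset: bicontinuous, with compact closed intervals. -/
def GloballyHyperbolic (α : Type*) [PartialOrder α] : Prop :=
  Bicontinuous α ∧ ∀ a b : α, @IsCompact α (intervalTop α) (Set.Icc a b)

/-- The poset of closed intervals `[a,b]`, `a ≤ b`, under reverse inclusion. -/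
def IX (α : Type*) [PartialOrder α] := {p : α × α // p.1 ≤ p.2}

instance IX.instPartialOrder {α : Type*} [PartialOrder α] : PartialOrder (IX α) where
  le x y := x.1.1 ≤ y.1.1 ∧ y.1.2 ≤ x.1.2
  le_refl x := ⟨le_refl _, le_refl _⟩
  le_trans x y z h1 h2 := ⟨h1.1.trans h2.1, h2.2.trans h1.2⟩
  le_antisymm x y h1 h2 :=
    Subtype.ext (Prod.ext_iff.mpr ⟨le_antisymm h1.1 h2.1, le_antisymm h2.2 h1.2⟩)

section Rel

variable {β : Type*}

/-- Directedness with respect to an arbitrary relation. -/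
def relDirectedOn (r : β → β → Prop) (S : Set β) : Prop :=
  ∀ x ∈ S, ∀ y ∈ S, ∃ z ∈ S, r x z ∧ r y z

/-- Least upper bound with respect to an arbitrary relation. -/
def relIsLUB (r : β → β → Prop) (S : Set β) (d : β) : Prop :=
  (∀ s ∈ S, r s d) ∧ ∀ u, (∀ s ∈ S, r s u) → r d u

/-- The way-below relation with respect to an arbitrary relation. -/
def relWayBelow (r : β → β → Prop) (a x : β) : Prop :=
  ∀ S : Set β, S.Nonempty → relDirectedOn r S → ∀ d, relIsLUB r S d → r x d →
    ∃ s ∈ S, r a s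

/-- An abstract basis: a transitive relation, interpolative from the `-` direction. -/
def AbstractBasis (r : β → β → Prop) : Prop :=
  Transitive r ∧ ∀ (F : Finset β) (x : β), (∀ y ∈ F, r y x) →
    ∃ z, (∀ y ∈ F, r y z) ∧ r z x

/-- Interpolation in the `+` direction. -/
def PlusInterpolative (r : β → β → Prop) : Prop :=
  ∀ (F : Finset β) (x : β), (∀ y ∈ F, r x y) → ∃ z, r x z ∧ (∀ y ∈ F, r z y)

/-- An ideal: a nonempty directed lower set. -/
def IsIdeal (r : β → β → Prop) (I : Set β) : Prop :=
  I.Nonempty ∧ (∀ x y, r x y → y ∈ I → x ∈ I) ∧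
    ∀ x ∈ I, ∀ y ∈ I, ∃ z ∈ I, r x z ∧ r y z

/-- The ideal completion: ideals ordered by inclusion. -/
def IdealCompletion (r : β → β → Prop) := {I : Set β // IsIdeal r I}

instance IdealCompletion.instPartialOrder {β : Type*} (r : β → β → Prop) :
    PartialOrder (IdealCompletion r) where
  le I J := I.1 ⊆ J.1
  le_refl I := subset_rfl
  le_trans I J K h1 h2 := Set.Subset.trans h1 h2
  le_antisymm I J h1 h2 := Subtype.ext (Set.Subset.antisymm h1 h2)

end Rel

/-- The order on maximal elements induced by interval endpoints. -/
def maxLe {α : Type*} (left right : α → α) (a b : α) : Prop :=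
  ∃ x, left x = a ∧ right x = b

/-- An interval poset. -/
structure IntervalPoset (α : Type*) [PartialOrder α] where
  left : α → α
  right : α → α
  left_max : ∀ x, IsMax (left x)
  right_max : ∀ x, IsMax (right x)
  glb : ∀ x, IsGLB {left x, right x} x
  glue : ∀ x y, right x = left y →
    ∃ z, IsGLB {x, y} z ∧ left z = left x ∧ right z = right y
  sub_left : ∀ x p, IsMax p → x ≤ p →
    ∃ z, IsGLB {left x, p} z ∧ left z = left x ∧ right z = p
  sub_right : ∀ x p, IsMax p → x ≤ p →
    ∃ z, IsGLB {p, right x} z ∧ left z = p ∧ right z = right x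

/-- An interval domain. -/
structure IntervalDomain (α : Type*) [PartialOrder α] extends IntervalPoset α where
  dcpo : ∀ S : Set α, S.Nonempty → DirectedOn (· ≤ ·) S → ∃ d, IsLUB S d
  cont : ContinuousPoset α
  ax1 : ∀ x p, IsMax p → wayBelow x p →
    (∀ z, IsGLB {left x, p} z → ∃ u, wayBelow z u) ∧
    (∀ z, IsGLB {p, right x} z → ∃ u, wayBelow z u)
  ax2b : ∀ x : α, (∃ u, wayBelow x u) ↔
    (∀ y, left y = left x → y ≤ x →
      relWayBelow (fun u v => u ≤ v ∧ right u = right y ∧ right v = right y) y (right y))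
  ax2c : ∀ x : α, (∃ u, wayBelow x u) ↔
    (∀ y, right y = right x → y ≤ x →
      relWayBelow (fun u v => u ≤ v ∧ left u = left y ∧ left v = left y) y (left y))
  ax3a : ∀ (p : α) (S : Set α), S.Nonempty → S ⊆ {z | left z = p} →
    DirectedOn (· ≤ ·) S → ∀ u, IsLUB S u →
      left u = p ∧ ∀ (q : α) (T : Set α), T.Nonempty → T ⊆ {z | left z = q} →
        DirectedOn (· ≤ ·) T → ∀ v, IsLUB T v → right '' T = right '' S →
          right u = right v
  ax3b : ∀ (q : α) (S : Set α), S.Nonempty → S ⊆ {z | right z = q} →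
    DirectedOn (· ≤ ·) S → ∀ u, IsLUB S u →
      right u = q ∧ ∀ (p : α) (T : Set α), T.Nonempty → T ⊆ {z | right z = p} →
        DirectedOn (· ≤ ·) T → ∀ v, IsLUB T v → left '' T = left '' S →
          left u = left v
  ax4 : ∀ x : α, @IsCompact α (scottTop α) ({y | x ≤ y} ∩ {y | IsMax y})

/-!
The interval topology has the intervals `(a, b)` as a basis: two intervals around `x` contain a
third one, since `↡x` is directed in a continuous poset and `↟x` is filtered in a bicontinuous one.
By interpolation, `a ≪ x` yields a nonempty open interval `(a, x)`, which therefore meets the dense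
set `C`; shrinking both ends of a basic interval this way gives one with endpoints in `C`.
-/

section WayBelow

variable {α : Type*} [Preorder α] {a b x y : α}

theorem wayBelow.le (h : wayBelow a x) : a ≤ x := by
  obtain ⟨_, rfl, has⟩ :=
    h {x} (singleton_nonempty x) (directedOn_singleton x) x isLUB_singleton le_rfl
  exact has

theorem wayBelow_of_le_of_wayBelow (hab : a ≤ b) (h : wayBelow b x) : wayBelow a x :=
  fun S hS hdir d hd hxd => (h S hS hdir d hd hxd).imp fun _ ⟨hs, hbs⟩ => ⟨hs, hab.trans hbs⟩

theorem wayBelow_of_wayBelow_of_le (h : wayBelow a x) (hxy : x ≤ y) : wayBelow a y :=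
  fun S hS hdir d hd hyd => h S hS hdir d hd (hxy.trans hyd)

theorem ContinuousPoset.exists_wayBelow (hc : ContinuousPoset α) (x : α) : ∃ a, wayBelow a x := by
  obtain ⟨S, hS, ⟨s, hs⟩, -, -⟩ := hc x
  exact ⟨s, hS hs⟩

theorem ContinuousPoset.exists_le_le_wayBelow (hc : ContinuousPoset α) (ha : wayBelow a x)
    (hb : wayBelow b x) : ∃ c, a ≤ c ∧ b ≤ c ∧ wayBelow c x := by
  obtain ⟨S, hS, hSne, hSdir, hSx⟩ := hc x
  obtain ⟨s, hs, has⟩ := ha S hSne hSdir x hSx le_rfl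
  obtain ⟨t, ht, hbt⟩ := hb S hSne hSdir x hSx le_rfl
  obtain ⟨c, hc, hsc, htc⟩ := hSdir s hs t ht
  exact ⟨c, has.trans hsc, hbt.trans htc, hS hc⟩

/-- Interpolation: `x` is also the directed supremum of `{d | ∃ y, d ≪ y ≪ x}`. -/
theorem ContinuousPoset.exists_wayBelow_wayBelow (hc : ContinuousPoset α) (h : wayBelow a x) :
    ∃ y, wayBelow a y ∧ wayBelow y x := by
  set D := {d | ∃ y, wayBelow d y ∧ wayBelow y x}
  have hDne : D.Nonempty := by
    obtain ⟨y, hy⟩ := hc.exists_wayBelow x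
    obtain ⟨d, hd⟩ := hc.exists_wayBelow y
    exact ⟨d, y, hd, hy⟩
  have hDdir : DirectedOn (· ≤ ·) D := by
    rintro d₁ ⟨y₁, hd₁, hy₁⟩ d₂ ⟨y₂, hd₂, hy₂⟩
    obtain ⟨y, hy₁y, hy₂y, hy⟩ := hc.exists_le_le_wayBelow hy₁ hy₂
    obtain ⟨d, hd₁d, hd₂d, hd⟩ := hc.exists_le_le_wayBelow
      (wayBelow_of_wayBelow_of_le hd₁ hy₁y) (wayBelow_of_wayBelow_of_le hd₂ hy₂y)
    exact ⟨d, ⟨y, hd, hy⟩, hd₁d, hd₂d⟩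
  have hDx : IsLUB D x := by
    obtain ⟨S, hS, -, -, hSx⟩ := hc x
    refine ⟨fun d ⟨y, hd, hy⟩ => hd.le.trans hy.le, fun u hu => hSx.2 fun s hs => ?_⟩
    obtain ⟨T, hT, -, -, hTs⟩ := hc s
    exact hTs.2 fun t ht => hu ⟨s, hT ht, hS hs⟩
  obtain ⟨d, ⟨y, hdy, hyx⟩, had⟩ := h D hDne hDdir x hDx le_rfl
  exact ⟨y, wayBelow_of_le_of_wayBelow had hdy, hyx⟩

/-- Otherwise `x` would be the infimum of the empty set, i.e. a top element, and `x ≪ x`. -/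
theorem Bicontinuous.exists_wayAbove (h : Bicontinuous α) (x : α) : ∃ b, wayBelow x b := by
  by_contra! hx
  have hx_top : ∀ y, y ≤ x := fun y => (h.2.2 x).2.2 fun b hb => (hx b hb).elim
  exact hx x ((h.2.1 x x).2 fun S ⟨s, hs⟩ _ _ _ _ => ⟨s, hs, hx_top s⟩)

end WayBelow

section IntervalTopology

variable {α : Type*} [Preorder α] {a b a' b' x : α} {C : Set α}

attribute [local instance] intervalTop

def wayBelowIoo (a b : α) : Set α := {x | wayBelow a x ∧ wayBelow x b}

def intervalBasisOn (C : Set α) : Set (Set α) :=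
  {s | ∃ a ∈ C, ∃ b ∈ C, wayBelow a b ∧ s = wayBelowIoo a b}

theorem wayBelowIoo_subset_wayBelowIoo (ha : a ≤ a') (hb : b' ≤ b) :
    wayBelowIoo a' b' ⊆ wayBelowIoo a b :=
  fun _ hx => ⟨wayBelow_of_le_of_wayBelow ha hx.1, wayBelow_of_wayBelow_of_le hx.2 hb⟩

theorem isOpen_wayBelowIoo : IsOpen (wayBelowIoo a b) :=
  TopologicalSpace.isOpen_generateFrom_of_mem ⟨a, b, rfl⟩

theorem Bicontinuous.isTopologicalBasis_intervalBasis (h : Bicontinuous α) :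
    TopologicalSpace.IsTopologicalBasis (intervalBasis α) where
  exists_subset_inter := by
    rintro _ ⟨a₁, b₁, rfl⟩ _ ⟨a₂, b₂, rfl⟩ x ⟨⟨ha₁, hb₁⟩, ha₂, hb₂⟩
    obtain ⟨a, ha₁a, ha₂a, hax⟩ := h.1.exists_le_le_wayBelow ha₁ ha₂
    obtain ⟨b, hxb, hbb₁, hbb₂⟩ := (h.2.2 x).1 b₁ hb₁ b₂ hb₂
    exact ⟨wayBelowIoo a b, ⟨a, b, rfl⟩, ⟨hax, hxb⟩, subset_inter
      (wayBelowIoo_subset_wayBelowIoo ha₁a hbb₁) (wayBelowIoo_subset_wayBelowIoo ha₂a hbb₂)⟩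
  sUnion_eq := sUnion_eq_univ_iff.2 fun x => by
    obtain ⟨a, ha⟩ := h.1.exists_wayBelow x
    obtain ⟨b, hb⟩ := h.exists_wayAbove x
    exact ⟨wayBelowIoo a b, ⟨a, b, rfl⟩, ha, hb⟩
  eq_generateFrom := rfl

theorem ContinuousPoset.exists_wayBelowIoo_subset_of_dense (hc : ContinuousPoset α)
    (hC : Dense C) (hx : x ∈ wayBelowIoo a b) :
    ∃ a' ∈ C, ∃ b' ∈ C, x ∈ wayBelowIoo a' b' ∧ wayBelowIoo a' b' ⊆ wayBelowIoo a b := by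
  obtain ⟨c, hac, hcx⟩ := hc.exists_wayBelow_wayBelow hx.1
  obtain ⟨d, hxd, hdb⟩ := hc.exists_wayBelow_wayBelow hx.2
  obtain ⟨a', ha'C, haa', ha'x⟩ := hC.exists_mem_open isOpen_wayBelowIoo ⟨c, hac, hcx⟩
  obtain ⟨b', hb'C, hxb', hb'b⟩ := hC.exists_mem_open isOpen_wayBelowIoo ⟨d, hxd, hdb⟩
  exact ⟨a', ha'C, b', hb'C, ⟨ha'x, hxb'⟩, wayBelowIoo_subset_wayBelowIoo haa'.le hb'b.le⟩

theorem Bicontinuous.isTopologicalBasis_intervalBasisOn (h : Bicontinuous α) (hC : Dense C) :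
    TopologicalSpace.IsTopologicalBasis (intervalBasisOn C) := by
  refine TopologicalSpace.isTopologicalBasis_of_isOpen_of_nhds ?_ fun x u hxu hu => ?_
  · rintro _ ⟨a, -, b, -, -, rfl⟩
    exact isOpen_wayBelowIoo
  obtain ⟨_, ⟨a, b, rfl⟩, hx, hab⟩ :=
    h.isTopologicalBasis_intervalBasis.exists_subset_of_mem_open hxu hu
  obtain ⟨a', ha', b', hb', hx', ha'b'⟩ := h.1.exists_wayBelowIoo_subset_of_dense hC hx
  exact ⟨wayBelowIoo a' b', ⟨a', ha', b', hb', wayBelow_of_wayBelow_of_le hx'.1 hx'.2.le, rfl⟩,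
    hx', ha'b'.trans hab⟩

theorem Set.Countable.intervalBasisOn (hC : C.Countable) : (intervalBasisOn C).Countable :=
  ((hC.prod hC).image fun p => wayBelowIoo p.1 p.2).mono <| by
    rintro _ ⟨a, ha, b, hb, -, rfl⟩
    exact ⟨(a, b), ⟨ha, hb⟩, rfl⟩

end IntervalTopology

/-- a countable dense subset of a bicontinuous poset yields a countable
basis of intervals with endpoints in it; separability implies second countability. -/
theorem countable_dense_gives_countable_basis {α : Type*} [PartialOrder α]
    (h : Bicontinuous α) (C : Set α) (hC : C.Countable)
    (hdense : @Dense α (intervalTop α) C) :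
    @TopologicalSpace.IsTopologicalBasis α (intervalTop α)
      {s | ∃ a ∈ C, ∃ b ∈ C, wayBelow a b ∧ s = {x | wayBelow a x ∧ wayBelow x b}} ∧
    Set.Countable
      {s | ∃ a ∈ C, ∃ b ∈ C, wayBelow a b ∧ s = {x | wayBelow a x ∧ wayBelow x b}} ∧
    @SecondCountableTopology α (intervalTop α) := by
  let _ := intervalTop α
  have hbasis := h.isTopologicalBasis_intervalBasisOn hdense
  have hcount := hC.intervalBasisOn
  exact ⟨hbasis, hcount, hbasis.secondCountableTopology hcount⟩
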